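/- Let γ be a nonnegative real random variable with cumulative distribution function F(x) = P(γ ≤ x), and let β > 0. Then the average of the Gaussian Q-function of √(β·γ) satisfies E[Q(√(β·γ))] = ∫₀^∞ √(β/(8πx)) · e^{−βx/2} · F(x) dx. -/

import Mathlib

open Real MeasureTheory ProbabilityTheory
open scoped ProbabilityTheory

/-- The Gaussian Q-function `Q(x) = ∫_x^∞ (1/√(2π)) e^{−t²/2} dt`. -/
noncomputable def gaussQ (x : ℝ) : ℝ :=
  ∫ t in Set.Ioi x, (1 / Real.sqrt (2 * Real.pi)) * Real.exp (-t ^ 2 / 2)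

/-!
For `y ≥ 0`, `Q(√(βy)) = ∫_y^∞ g_β` with `g_β(x) = √(β/(8πx)) e^{-βx/2} = -(d/dx) Q(√(βx))`
(half the density of `Z²/β` for a standard normal `Z`). Taking expectations and swapping the
integrals by Tonelli gives `E[Q(√(βγ))] = ∫_0^∞ g_β(x) P(γ < x) dx`, and `P(γ < x) = P(γ ≤ x)`
except at the countably many atoms of `γ`.
-/

open Set Filter Topology
open scoped ENNReal NNReal

section TailIntegral

variable {E : Type*} [NormedAddCommGroup E] [NormedSpace ℝ E] {f : ℝ → E}

theorem integral_Ioi_eq_sub_intervalIntegral (hf : Integrable f) (a b : ℝ) :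
    ∫ t in Ioi b, f t = (∫ t in Ioi a, f t) - ∫ t in a..b, f t := by
  rw [← intervalIntegral.integral_Ioi_sub_Ioi' hf.integrableOn hf.integrableOn, sub_sub_cancel]

theorem hasDerivAt_integral_Ioi [CompleteSpace E] (hf : Integrable f) {x : ℝ}
    (hfx : ContinuousAt f x) (hmeas : StronglyMeasurableAtFilter f (𝓝 x)) :
    HasDerivAt (fun y ↦ ∫ t in Ioi y, f t) (-f x) x := by
  rw [funext (integral_Ioi_eq_sub_intervalIntegral hf 0)]
  simpa using (intervalIntegral.integral_hasDerivAt_right hf.intervalIntegrable hmeas hfx).const_sub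
    (∫ t in Ioi 0, f t)

theorem tendsto_integral_Ioi_atTop [CompleteSpace E] (hf : Integrable f) :
    Tendsto (fun y ↦ ∫ t in Ioi y, f t) atTop (𝓝 0) := by
  rw [funext (integral_Ioi_eq_sub_intervalIntegral hf 0)]
  simpa using (intervalIntegral_tendsto_integral_Ioi 0 hf.integrableOn tendsto_id).const_sub
    (∫ t in Ioi 0, f t)

end TailIntegral

theorem gaussQ_eq_integral_gaussianPDFReal (x : ℝ) :
    gaussQ x = ∫ t in Ioi x, gaussianPDFReal 0 1 t := by
  simp [gaussQ, gaussianPDFReal]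

theorem continuous_gaussianPDFReal (μ : ℝ) (v : ℝ≥0) : Continuous (gaussianPDFReal μ v) := by
  unfold gaussianPDFReal; fun_prop

theorem hasDerivAt_gaussQ (x : ℝ) : HasDerivAt gaussQ (-gaussianPDFReal 0 1 x) x := by
  rw [funext gaussQ_eq_integral_gaussianPDFReal]
  exact hasDerivAt_integral_Ioi (integrable_gaussianPDFReal 0 1)
    (continuous_gaussianPDFReal 0 1).continuousAt
    ((continuous_gaussianPDFReal 0 1).stronglyMeasurableAtFilter _ _)

@[fun_prop]
theorem continuous_gaussQ : Continuous gaussQ :=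
  continuous_iff_continuousAt.2 fun x ↦ (hasDerivAt_gaussQ x).continuousAt

theorem tendsto_gaussQ_atTop : Tendsto gaussQ atTop (𝓝 0) := by
  simpa only [← gaussQ_eq_integral_gaussianPDFReal] using
    tendsto_integral_Ioi_atTop (integrable_gaussianPDFReal 0 1)

theorem gaussQ_nonneg (x : ℝ) : 0 ≤ gaussQ x := by
  rw [gaussQ_eq_integral_gaussianPDFReal]
  exact setIntegral_nonneg measurableSet_Ioi fun t _ ↦ gaussianPDFReal_nonneg 0 1 t

noncomputable def gaussQSqrtDensity (β x : ℝ) : ℝ :=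
  √(β / (8 * π * x)) * exp (-(β * x) / 2)

theorem gaussQSqrtDensity_nonneg (β x : ℝ) : 0 ≤ gaussQSqrtDensity β x := by
  unfold gaussQSqrtDensity; positivity

theorem measurable_gaussQSqrtDensity (β : ℝ) : Measurable (gaussQSqrtDensity β) := by
  unfold gaussQSqrtDensity; fun_prop

theorem gaussQSqrtDensity_eq {β x : ℝ} (hβ : 0 < β) (hx : 0 < x) :
    gaussQSqrtDensity β x = gaussianPDFReal 0 1 √(β * x) * (β / (2 * √(β * x))) := by
  have hβx : 0 < β * x := mul_pos hβ hx
  have hfactor : √(β / (8 * π * x)) = (√(2 * π))⁻¹ * (β / (2 * √(β * x))) := by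
    rw [sqrt_eq_iff_eq_sq (by positivity) (by positivity), mul_pow, inv_pow, div_pow, mul_pow,
      sq_sqrt (by positivity), sq_sqrt hβx.le]
    field_simp
    ring
  simp only [gaussQSqrtDensity, hfactor, gaussianPDFReal, NNReal.coe_one, mul_one, sub_zero,
    sq_sqrt hβx.le]
  ring

theorem hasDerivAt_gaussQ_sqrt_mul {β x : ℝ} (hβ : 0 < β) (hx : 0 < x) :
    HasDerivAt (fun y ↦ gaussQ √(β * y)) (-gaussQSqrtDensity β x) x := by
  have hsqrt : HasDerivAt (fun y ↦ √(β * y)) (β / (2 * √(β * x))) x := by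
    simpa [div_eq_inv_mul] using
      ((hasDerivAt_id x).const_mul β).sqrt (mul_pos hβ hx).ne'
  rw [gaussQSqrtDensity_eq hβ hx, ← neg_mul]
  exact (hasDerivAt_gaussQ _).comp x hsqrt

theorem ofReal_gaussQ_sqrt_mul {β y : ℝ} (hβ : 0 < β) (hy : 0 ≤ y) :
    ENNReal.ofReal (gaussQ √(β * y)) = ∫⁻ x in Ioi y, ENNReal.ofReal (gaussQSqrtDensity β x) := by
  set G : ℝ → ℝ := fun y ↦ -gaussQ √(β * y)
  have hcont : ContinuousWithinAt G (Ici y) y := by fun_prop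
  have hderiv : ∀ x ∈ Ioi y, HasDerivAt G (gaussQSqrtDensity β x) x := fun x hx ↦ by
    simpa [G] using (hasDerivAt_gaussQ_sqrt_mul hβ (hy.trans_lt hx)).fun_neg
  have hlim : Tendsto G atTop (𝓝 0) := by
    simpa [G] using (tendsto_gaussQ_atTop.comp
      (tendsto_sqrt_atTop.comp (tendsto_id.const_mul_atTop hβ))).neg
  have hnonneg : ∀ x ∈ Ioi y, 0 ≤ gaussQSqrtDensity β x := fun x _ ↦ gaussQSqrtDensity_nonneg β x
  rw [← ofReal_integral_eq_lintegral_ofReal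
      (integrableOn_Ioi_deriv_of_nonneg hcont hderiv hnonneg hlim)
      (ae_of_all _ (gaussQSqrtDensity_nonneg β)),
    integral_Ioi_of_hasDerivAt_of_nonneg hcont hderiv hnonneg hlim]
  simp [G]

section Tonelli

variable {Ω : Type*} [MeasurableSpace Ω] (μ : Measure Ω) (ν : Measure ℝ)

theorem lintegral_lintegral_Ioi_eq_lintegral_mul_measure_lt [SFinite μ] [SFinite ν]
    {X : Ω → ℝ} (hX : Measurable X) {g : ℝ → ℝ≥0∞} (hg : Measurable g) :
    ∫⁻ ω, ∫⁻ x in Ioi (X ω), g x ∂ν ∂μ = ∫⁻ x, g x * μ {ω | X ω < x} ∂ν := by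
  set F : Ω → ℝ → ℝ≥0∞ := fun ω x ↦ if X ω < x then g x else 0
  have hF : Measurable (Function.uncurry F) :=
    Measurable.ite (measurableSet_lt (hX.comp measurable_fst) measurable_snd)
      (hg.comp measurable_snd) measurable_const
  have houter (ω : Ω) : ∫⁻ x in Ioi (X ω), g x ∂ν = ∫⁻ x, F ω x ∂ν := by
    simp only [← lintegral_indicator measurableSet_Ioi, indicator_apply, mem_Ioi, F]
  have hinner (x : ℝ) : ∫⁻ ω, F ω x ∂μ = g x * μ {ω | X ω < x} := by
    have hmeas : MeasurableSet {ω | X ω < x} := hX measurableSet_Iio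
    rw [← lintegral_indicator_const hmeas]
    simp only [indicator_apply, mem_ofPred_eq, F]
  simp_rw [houter, ← hinner]
  exact lintegral_lintegral_swap hF.aemeasurable

theorem ae_measure_lt_eq_measure_le [NullSingletonClass ν] (X : Ω → ℝ) :
    ∀ᵐ x ∂ν, μ {ω | X ω < x} = μ {ω | X ω ≤ x} := by
  have hcount := ((countable_meas_le_ne_meas_lt μ (-X)).image Neg.neg).measure_zero ν
  refine ae_iff.2 (measure_mono_null (fun x hx ↦ ?_) hcount)
  refine ⟨-x, ?_, neg_neg x⟩
  simpa [neg_le_neg_iff, neg_lt_neg_iff, eq_comm] using hx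

theorem lintegral_lintegral_Ioi_eq_setLIntegral_mul_measure_le [SFinite μ] [SFinite ν]
    [NullSingletonClass ν] {X : Ω → ℝ} (hX : Measurable X) {a : ℝ} (hXa : ∀ ω, a ≤ X ω)
    {g : ℝ → ℝ≥0∞} (hg : Measurable g) :
    ∫⁻ ω, ∫⁻ x in Ioi (X ω), g x ∂ν ∂μ = ∫⁻ x in Ioi a, g x * μ {ω | X ω ≤ x} ∂ν := by
  have hsupport : (fun x ↦ g x * μ {ω | X ω < x}).support ⊆ Ioi a := by
    intro x hx
    by_contra hxa
    have hempty : {ω | X ω < x} = ∅ := by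
      ext ω
      simpa using (not_lt.1 hxa).trans (hXa ω)
    simp [hempty] at hx
  rw [lintegral_lintegral_Ioi_eq_lintegral_mul_measure_lt μ ν hX hg,
    ← setLIntegral_eq_of_support_subset hsupport]
  refine lintegral_congr_ae (ae_restrict_of_ae ?_)
  filter_upwards [ae_measure_lt_eq_measure_le μ ν X] with x hx
  rw [hx]

end Tonelli

theorem stmt_9 {Ω : Type*} [MeasureSpace Ω] [IsProbabilityMeasure (ℙ : Measure Ω)]
    (γ : Ω → ℝ) (hγmeas : Measurable γ) (hγnonneg : ∀ ω, 0 ≤ γ ω)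
    (β : ℝ) (hβ : 0 < β) :
    ∫ ω, gaussQ (Real.sqrt (β * γ ω)) ∂ℙ =
      ∫ x in Set.Ioi (0 : ℝ),
        Real.sqrt (β / (8 * Real.pi * x)) * Real.exp (-(β * x) / 2) *
          (ℙ {ω | γ ω ≤ x}).toReal := by
  set g : ℝ → ℝ≥0∞ := fun x ↦ ENNReal.ofReal (gaussQSqrtDensity β x)
  have hg : Measurable g := (measurable_gaussQSqrtDensity β).ennreal_ofReal
  have hcdf : Measurable fun x ↦ ℙ {ω | γ ω ≤ x} :=
    Monotone.measurable fun _ _ hab ↦ measure_mono fun _ hω ↦ le_trans hω hab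
  calc ∫ ω, gaussQ √(β * γ ω)
      = (∫⁻ ω, ENNReal.ofReal (gaussQ √(β * γ ω))).toReal :=
        integral_eq_lintegral_of_nonneg_ae (ae_of_all _ fun _ ↦ gaussQ_nonneg _) (by fun_prop)
    _ = (∫⁻ ω, ∫⁻ x in Ioi (γ ω), g x).toReal := by
        simp_rw [ofReal_gaussQ_sqrt_mul hβ (hγnonneg _), g]
    _ = (∫⁻ x in Ioi 0, g x * ℙ {ω | γ ω ≤ x}).toReal := by
        rw [lintegral_lintegral_Ioi_eq_setLIntegral_mul_measure_le _ _ hγmeas hγnonneg hg]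
    _ = ∫ x in Ioi 0, (g x * ℙ {ω | γ ω ≤ x}).toReal :=
        (integral_toReal (hg.mul hcdf).aemeasurable
          (ae_of_all _ fun _ ↦ ENNReal.mul_lt_top ENNReal.ofReal_lt_top (measure_lt_top _ _))).symm
    _ = _ := by
        congr with x
        rw [ENNReal.toReal_mul, ENNReal.toReal_ofReal (gaussQSqrtDensity_nonneg β x)]
        rfl
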